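/- Let T : A(X,E) → A(Y,F) be a surjective linear map that preserves common zeros, where A(X,E) and A(Y,F) are almost normally multiplicative vector subspaces of C(X,E) and C(Y,F). If x_1, x_2 ∈ X and x_1 ≠ x_2, then Z_{x_1} ∩ Z_{x_2} = ∅. -/

import Mathlib

open Set Filter Topology

/-- The zero set of a function. -/
def zeroSet {α β : Type*} [Zero β] (f : α → β) : Set α := {x | f x = 0}

/-- A vector subspace `AX` of `C(X)` is almost normal if all its members are continuous and
for every pair of subsets `P`, `Q` of `X` whose closures in the Stone–Čech compactification
`βX` are disjoint, there is `f ∈ AX` with `f = 0` on `P` and `f = 1` on `Q`. -/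
def AlmostNormal (X : Type*) [TopologicalSpace X] (AX : Submodule ℝ (X → ℝ)) : Prop :=
  (∀ φ ∈ AX, Continuous φ) ∧
  ∀ P Q : Set X,
    Disjoint (closure (stoneCechUnit '' P)) (closure (stoneCechUnit '' Q)) →
      ∃ φ ∈ AX, (∀ x ∈ P, φ x = 0) ∧ (∀ x ∈ Q, φ x = 1)

/-- A vector subspace `AXE` of `C(X,E)` is almost normally multiplicative if all its members
are continuous, it contains the constant functions, and there is an almost normal subspace
`AX` of `C(X)` such that `φ • f ∈ AXE` whenever `φ ∈ AX` and `f ∈ AXE`. -/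
def AlmostNormallyMultiplicative (X E : Type*) [TopologicalSpace X] [TopologicalSpace E]
    [AddCommGroup E] [Module ℝ E] (AXE : Submodule ℝ (X → E)) : Prop :=
  (∀ f ∈ AXE, Continuous f) ∧
  (∀ u : E, (fun _ : X => u) ∈ AXE) ∧
  ∃ AX : Submodule ℝ (X → ℝ), AlmostNormal X AX ∧
    ∀ φ ∈ AX, ∀ f ∈ AXE, (fun x => φ x • f x) ∈ AXE

/-- A map `T` between subspaces of `C(X,E)` and `C(Y,F)` preserves common zeros if for every
`k ∈ ℕ` and every finite family `f₁, …, f_k`, the zero sets of the `fᵢ` have a common point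
iff the zero sets of the `T fᵢ` do. -/
def PreservesCommonZeros {X Y E F : Type*} [TopologicalSpace X] [TopologicalSpace Y]
    [AddCommGroup E] [Module ℝ E] [AddCommGroup F] [Module ℝ F]
    {AXE : Submodule ℝ (X → E)} {AYF : Submodule ℝ (Y → F)}
    (T : AXE → AYF) : Prop :=
  ∀ (k : ℕ) (f : Fin (k + 1) → AXE),
    (⋂ i, zeroSet ((f i : X → E))).Nonempty ↔ (⋂ i, zeroSet ((T (f i) : Y → F))).Nonempty

/-- The set `Z_x ⊆ βY`: the intersection, over all `f` in the subspace vanishing at `x`, of the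
closures in `βY` of the zero sets of `T f`. -/
def Zx {X Y E F : Type*} [TopologicalSpace X] [TopologicalSpace Y]
    [AddCommGroup E] [Module ℝ E] [AddCommGroup F] [Module ℝ F]
    {AXE : Submodule ℝ (X → E)} {AYF : Submodule ℝ (Y → F)}
    (T : AXE → AYF) (x : X) : Set (StoneCech Y) :=
  ⋂ (f : AXE) (_ : (f : X → E) x = 0), closure (stoneCechUnit '' zeroSet ((T f : Y → F)))

/-!
Separate `x₁` from `x₂` by `φ ∈ A(X)` and split a preimage `c` of a nonzero constant `𝐯` as
`c = φ • c + (1 - φ) • c`, the summands vanishing at `x₁` and `x₂` respectively. Then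
`T(φ • c) + T((1 - φ) • c) = 𝐯`, so `T(φ • c)` is `0` on the zero set of the first image and
`v` on that of the second. Composing with a function `F → [0, 1]` separating `0` from `v`
(topological groups are completely regular) and extending to `βY` separates the closures of the
two zero sets, which contain `Z_{x₁}` and `Z_{x₂}`.
-/

instance IsTopologicalAddGroup.toCompletelyRegularSpace {G : Type*} [AddGroup G]
    [TopologicalSpace G] [IsTopologicalAddGroup G] : CompletelyRegularSpace G :=
  .of_exists_uniformSpace ⟨IsTopologicalAddGroup.rightUniformSpace G, rfl⟩

section StoneCech

variable {Y : Type*} [TopologicalSpace Y]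

theorem closure_image_stoneCechUnit_subset_preimage {β : Type*} [TopologicalSpace β]
    [T2Space β] [CompactSpace β] {g : Y → β} (hg : Continuous g) {S : Set Y} {A : Set β}
    (hA : IsClosed A) (hSA : MapsTo g S A) :
    closure (stoneCechUnit '' S) ⊆ stoneCechExtend hg ⁻¹' A := by
  refine closure_minimal ?_ (hA.preimage (continuous_stoneCechExtend hg))
  rintro _ ⟨y, hy, rfl⟩
  simpa only [mem_preimage, stoneCechExtend_stoneCechUnit] using hSA hy

theorem disjoint_closure_image_stoneCechUnit {Z : Type*} [TopologicalSpace Z] [T1Space Z]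
    [CompletelyRegularSpace Z] {h : Y → Z} (hh : Continuous h) {S S' : Set Y} {a b : Z}
    (hab : a ≠ b) (hS : MapsTo h S {a}) (hS' : MapsTo h S' {b}) :
    Disjoint (closure (stoneCechUnit '' S)) (closure (stoneCechUnit '' S')) := by
  obtain ⟨ξ, hξ, hξa, hξb⟩ :=
    CompletelyRegularSpace.completely_regular a {b} isClosed_singleton hab
  have hg : Continuous (ξ ∘ h) := hξ.comp hh
  have hS0 : MapsTo (ξ ∘ h) S {0} := fun y hy =>
    (congrArg ξ (mem_singleton_iff.mp (hS hy))).trans hξa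
  have hS'1 : MapsTo (ξ ∘ h) S' {1} := fun y hy =>
    (congrArg ξ (mem_singleton_iff.mp (hS' hy))).trans (hξb rfl)
  refine Disjoint.mono
    (closure_image_stoneCechUnit_subset_preimage hg isClosed_singleton hS0)
    (closure_image_stoneCechUnit_subset_preimage hg isClosed_singleton hS'1) ?_
  exact Disjoint.preimage _ (disjoint_singleton.mpr zero_ne_one)

end StoneCech

namespace AlmostNormal

variable {X : Type*} [TopologicalSpace X] {AX : Submodule ℝ (X → ℝ)}

theorem one_mem (hAX : AlmostNormal X AX) : (1 : X → ℝ) ∈ AX := by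
  obtain ⟨φ, hφ, -, hφ1⟩ := hAX.2 ∅ univ (by simp)
  convert hφ
  exact funext fun x => (hφ1 x (mem_univ x)).symm

theorem exists_eq_zero_eq_one [T1Space X] [CompletelyRegularSpace X] (hAX : AlmostNormal X AX)
    {x₁ x₂ : X} (hx : x₁ ≠ x₂) : ∃ φ ∈ AX, φ x₁ = 0 ∧ φ x₂ = 1 := by
  have hdisj := disjoint_closure_image_stoneCechUnit continuous_id hx
    (mapsTo_id {x₁}) (mapsTo_id {x₂})
  obtain ⟨φ, hφ, hφ0, hφ1⟩ := hAX.2 _ _ hdisj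
  exact ⟨φ, hφ, hφ0 x₁ rfl, hφ1 x₂ rfl⟩

end AlmostNormal

theorem AlmostNormallyMultiplicative.exists_add_eq_of_ne {X E : Type*} [TopologicalSpace X]
    [T1Space X] [CompletelyRegularSpace X] [TopologicalSpace E] [AddCommGroup E] [Module ℝ E]
    {AXE : Submodule ℝ (X → E)} (hAXE : AlmostNormallyMultiplicative X E AXE)
    {x₁ x₂ : X} (hx : x₁ ≠ x₂) {f : X → E} (hf : f ∈ AXE) :
    ∃ f₁ ∈ AXE, ∃ f₂ ∈ AXE, f₁ x₁ = 0 ∧ f₂ x₂ = 0 ∧ f₁ + f₂ = f := by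
  obtain ⟨-, -, AX, hAX, hmul⟩ := hAXE
  obtain ⟨φ, hφ, hφ₁, hφ₂⟩ := hAX.exists_eq_zero_eq_one hx
  refine ⟨_, hmul φ hφ f hf, _, hmul (1 - φ) (AX.sub_mem hAX.one_mem hφ) f hf, ?_, ?_, ?_⟩
  · simp only [hφ₁, zero_smul]
  · simp only [Pi.sub_apply, Pi.one_apply, hφ₂, sub_self, zero_smul]
  · funext x
    simp only [Pi.add_apply, Pi.sub_apply, Pi.one_apply, sub_smul, one_smul, add_sub_cancel]

theorem Zx_subset_closure_image_zeroSet {X Y E F : Type*} [TopologicalSpace X]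
    [TopologicalSpace Y] [AddCommGroup E] [Module ℝ E] [AddCommGroup F] [Module ℝ F]
    {AXE : Submodule ℝ (X → E)} {AYF : Submodule ℝ (Y → F)} (T : AXE → AYF) {x : X} {f : AXE}
    (hf : (f : X → E) x = 0) :
    Zx T x ⊆ closure (stoneCechUnit '' zeroSet (T f : Y → F)) :=
  iInter₂_subset f hf

theorem Zx_disjoint {X Y E F : Type*}
    [TopologicalSpace X] [T2Space X] [CompletelyRegularSpace X]
    [TopologicalSpace Y]
    [AddCommGroup E] [Module ℝ E] [TopologicalSpace E]
    [AddCommGroup F] [Module ℝ F] [TopologicalSpace F] [IsTopologicalAddGroup F]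
    [T2Space F] [Nontrivial F]
    {AXE : Submodule ℝ (X → E)} {AYF : Submodule ℝ (Y → F)}
    (hAXE : AlmostNormallyMultiplicative X E AXE)
    (hAYF : AlmostNormallyMultiplicative Y F AYF)
    (T : AXE →ₗ[ℝ] AYF) (hTsurj : Function.Surjective T)
    (x₁ x₂ : X) (hx : x₁ ≠ x₂) :
    Zx (T : AXE → AYF) x₁ ∩ Zx (T : AXE → AYF) x₂ = ∅ := by
  obtain ⟨v, hv⟩ := exists_ne (0 : F)
  obtain ⟨c, hc⟩ := hTsurj ⟨fun _ => v, hAYF.2.1 v⟩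
  obtain ⟨f₁, hf₁, f₂, hf₂, hf₁x, hf₂x, hsum⟩ := hAXE.exists_add_eq_of_ne hx c.2
  set g₁ : AXE := ⟨f₁, hf₁⟩
  set g₂ : AXE := ⟨f₂, hf₂⟩
  have hTsum : (T g₁ : Y → F) + (T g₂ : Y → F) = fun _ => v := by
    rw [← Submodule.coe_add, ← map_add, show g₁ + g₂ = c from Subtype.ext hsum, hc]
  have hdisj := disjoint_closure_image_stoneCechUnit (hAYF.1 _ (T g₁).2) hv.symm
    (S := zeroSet (T g₁ : Y → F)) (S' := zeroSet (T g₂ : Y → F)) (fun _ hy => hy)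
    (fun y (hy : (T g₂ : Y → F) y = 0) => by
      simpa only [Pi.add_apply, hy, add_zero, mem_singleton_iff] using congrFun hTsum y)
  exact (hdisj.mono (Zx_subset_closure_image_zeroSet _ hf₁x)
    (Zx_subset_closure_image_zeroSet _ hf₂x)).inter_eq
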